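/- arXiv:math/0612263 — 3 statements merged into one kernel-verified Lean document; each statement's English description precedes it below -/
import Mathlib

section
/- Let F be a field of characteristic p > 0 and let K be a subfield of F such that F is generated as a field by K together with F^p. If [K : K^p] is finite, then [F : F^p] ≤ [K : K^p]. -/
/-!
Every `x : F` is a root of `X ^ p - x ^ p`, so `F` is algebraic over `F^p` and the `F^p`-algebra
generated by `i(K)` is already a field; by hypothesis it is `F`. Since `i(K)` is closed under
multiplication, that algebra is the `F^p`-span of `i(K)`. Finally `i` maps `K^p` into `F^p`, so the
image of a `K^p`-basis of `K` spans `F` over `F^p`.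
-/

open Submodule

theorem Subfield.isAlgebraic_closure_range_pow (F : Type*) [Field F] {n : ℕ} (hn : n ≠ 0) :
    Algebra.IsAlgebraic (Subfield.closure (Set.range fun x : F => x ^ n)) F :=
  ⟨fun x => IsAlgebraic.of_pow (Nat.pos_of_ne_zero hn)
    (isAlgebraic_algebraMap (⟨x ^ n, Subfield.subset_closure ⟨x, rfl⟩⟩ :
      Subfield.closure (Set.range fun x : F => x ^ n)))⟩

theorem Subfield.map_closure_range_pow_le {K F : Type*} [Field K] [Field F] (f : K →+* F) (n : ℕ) :
    (Subfield.closure (Set.range fun x : K => x ^ n)).map f ≤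
      Subfield.closure (Set.range fun x : F => x ^ n) := by
  rw [Subfield.map_le_iff_le_comap, Subfield.closure_le]
  rintro _ ⟨x, rfl⟩
  exact Subfield.subset_closure ⟨f x, (map_pow f x n).symm⟩

theorem Submodule.span_eq_top_of_closure_union_eq_top {S E : Type*} [Field S] [Field E]
    [Algebra S E] [Algebra.IsAlgebraic S E] (M : Submonoid E) {T : Set E}
    (hT : T ⊆ Set.range (algebraMap S E)) (hgen : Subfield.closure ((M : Set E) ∪ T) = ⊤) :
    span S (M : Set E) = ⊤ := by
  have hfield : IntermediateField.adjoin S (M : Set E) = ⊤ := by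
    rw [← IntermediateField.toSubfield_inj, IntermediateField.adjoin_toSubfield,
      IntermediateField.top_toSubfield, eq_top_iff, ← hgen, Set.union_comm]
    exact Subfield.closure_mono (Set.union_subset_union_left _ hT)
  rw [← Algebra.adjoin_eq_span_of_subset S (by rw [Submonoid.closure_eq]; exact subset_span),
    ← IntermediateField.adjoin_toSubalgebra, hfield]
  rfl

theorem RingHom.apply_mem_span_image {K F : Type*} [Field K] [Field F] (f : K →+* F)
    {S : Subfield K} {T : Subfield F} (hST : S.map f ≤ T) {s : Set K} {x : K}
    (hx : x ∈ span S s) : f x ∈ span T (f '' s) := by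
  induction hx using Submodule.span_induction with
  | mem y hy => exact subset_span ⟨y, hy, rfl⟩
  | zero => simp
  | add y z _ _ hy hz => rw [map_add]; exact add_mem hy hz
  | smul c y _ hy =>
    have hc : f c ∈ T := hST ⟨c, c.2, rfl⟩
    rw [Subfield.smul_def, smul_eq_mul, map_mul]
    exact smul_mem _ (⟨f c, hc⟩ : T) hy

theorem stmt_2_general (p : ℕ) [Fact p.Prime] (F K : Type*) [Field F] [Field K]
    (i : K →+* F)
    -- `F` is generated as a field by `K` together with `F^p`:
    (hgen : Subfield.closure (Set.range i ∪ Set.range fun x : F => x ^ p) = ⊤)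
    -- `[K : K^p]` is finite:
    [FiniteDimensional (Subfield.closure (Set.range fun x : K => x ^ p)) K] :
    -- then `[F : F^p]` is finite and `[F : F^p] ≤ [K : K^p]`:
    FiniteDimensional (Subfield.closure (Set.range fun x : F => x ^ p)) F ∧
    Module.finrank (Subfield.closure (Set.range fun x : F => x ^ p)) F ≤
      Module.finrank (Subfield.closure (Set.range fun x : K => x ^ p)) K := by
  set Fp := Subfield.closure (Set.range fun x : F => x ^ p)
  set Kp := Subfield.closure (Set.range fun x : K => x ^ p)
  have := Subfield.isAlgebraic_closure_range_pow F (Fact.out : p.Prime).ne_zero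
  have hK : span Fp (Set.range i) = ⊤ :=
    span_eq_top_of_closure_union_eq_top (MonoidHom.mrange i)
      (fun y hy => ⟨⟨y, Subfield.subset_closure hy⟩, rfl⟩) hgen
  let b := Module.finBasis Kp K
  have hspan : span Fp (Set.range (i ∘ b)) = ⊤ := by
    rw [eq_top_iff, ← hK, span_le, Set.range_comp]
    rintro _ ⟨k, rfl⟩
    exact i.apply_mem_span_image (Subfield.map_closure_range_pow_le i p) (b.mem_span k)
  refine ⟨⟨fg_def.2 ⟨_, Set.finite_range _, hspan⟩⟩, ?_⟩
  simpa using finrank_le_of_span_eq_top hspan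

/-- Let `F` be a field of characteristic `p > 0` and let `K` be a subfield
of `F` (encoded as a field `K` with an embedding `i : K →+* F`) such that `F` is generated
as a field by `K` together with `F^p`.  If `[K : K^p]` is finite, then `[F : F^p] ≤ [K : K^p]`.
Here `E^p = {x^p : x ∈ E}` is viewed as the subfield
`Subfield.closure (Set.range (· ^ p))` of `E` (in characteristic `p` the set of `p`-th
powers is already a subfield, so the closure is that set). -/
theorem stmt_2 (p : ℕ) [Fact p.Prime] (F K : Type*) [Field F] [Field K]
    [CharP F p] [CharP K p] (i : K →+* F)
    -- `F` is generated as a field by `K` together with `F^p`: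
    (hgen : Subfield.closure (Set.range i ∪ Set.range fun x : F => x ^ p) = ⊤)
    -- `[K : K^p]` is finite:
    [FiniteDimensional (Subfield.closure (Set.range fun x : K => x ^ p)) K] :
    -- then `[F : F^p]` is finite and `[F : F^p] ≤ [K : K^p]`:
    FiniteDimensional (Subfield.closure (Set.range fun x : F => x ^ p)) F ∧
    Module.finrank (Subfield.closure (Set.range fun x : F => x ^ p)) F ≤
      Module.finrank (Subfield.closure (Set.range fun x : K => x ^ p)) K :=
  stmt_2_general p F K i hgen
end

section
/- Let G be a Hausdorff topological abelian group and let H_0 ⊇ H_1 ⊇ H_2 ⊇ ⋯ be a descending sequence of open subgroups of G forming a neighbourhood basis of the identity (every neighbourhood of 0 contains some H_i), such that for each i ≥ 0 the quotient group H_i/H_{i+1} is torsion-free. Then every finitely generated subgroup B of G with B ⊆ H_0 is discrete in G. -/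
/-- The additive torsion-free predicate as in the older Mathlib (removed since). -/
def AddMonoid.IsTorsionFree (G : Type*) [AddMonoid G] : Prop :=
  ∀ g : G, g ≠ 0 → ¬IsOfFinAddOrder g

/-!
Torsion-freeness of `H i ⧸ H (i + 1)` makes every `H i` saturated in `H 0`: if `n • x ∈ H i`
with `n ≠ 0` and `x ∈ H 0`, then `x ∈ H i`. So the subgroups `B ∩ H i` form a descending chain
of saturated subgroups of the finitely generated group `B`. A saturated subgroup of finite rank
has no proper saturated subgroup of the same rank, so the chain stabilizes at some `N`, and its
limit is `B ∩ ⋂ i, H i = 0` since `G` is Hausdorff. Thus `B` meets the open subgroup `H N`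
only in `0`.
-/
namespace Submodule

variable {R M : Type*} [CommRing R] [IsDomain R] [AddCommGroup M] [Module R M]

theorem eq_of_le_of_rank_eq_of_smul_mem {K L : Submodule R M} (hKL : K ≤ L)
    (hrank : Module.rank R K = Module.rank R L) (hL : Module.rank R L < Cardinal.aleph0)
    (hK : ∀ (a : R) (x : M), a ≠ 0 → a • x ∈ K → x ∈ K) : K = L := by
  refine le_antisymm hKL fun x hx => ?_
  set K' := K.comap L.subtype
  have hquot : Module.rank R (L ⧸ K') = 0 := by
    have h := rank_quotient_add_rank_of_isDomain K'
    rw [(comapSubtypeEquivOfLe hKL).rank_eq, hrank] at h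
    exact Cardinal.eq_of_add_eq_add_right (h.trans (zero_add _).symm) hL
  obtain ⟨a, ha, hax⟩ := rank_eq_zero_iff.mp hquot (Quotient.mk ⟨x, hx⟩)
  rw [← Quotient.mk_smul, Quotient.mk_eq_zero] at hax
  exact hK a x ha hax

theorem exists_eq_iInf_of_antitone_of_smul_mem [Module.Finite R M] {K : ℕ → Submodule R M}
    (hanti : Antitone K) (hK : ∀ i (a : R) (x : M), a ≠ 0 → a • x ∈ K i → x ∈ K i) :
    ∃ N, K N = ⨅ i, K i := by
  set N := Function.argmin fun i => Module.rank R (K i)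
  have hstable : ∀ m, N ≤ m → K m = K N := fun m hm =>
    eq_of_le_of_rank_eq_of_smul_mem (hanti hm)
      (le_antisymm (rank_mono (hanti hm)) (Function.argmin_le (fun i => Module.rank R (K i)) m))
      ((rank_le (K N)).trans_lt (Module.rank_lt_aleph0 R M)) (hK m)
  refine ⟨N, le_antisymm (le_iInf fun i => ?_) (iInf_le K N)⟩
  rcases le_total N i with h | h
  · exact (hstable i h).ge
  · exact hanti h

end Submodule

namespace AddSubgroup

variable {G : Type*} [AddCommGroup G]

theorem mem_of_zsmul_mem_of_isTorsionFree {H K : AddSubgroup G}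
    (htf : AddMonoid.IsTorsionFree (H ⧸ K.addSubgroupOf H)) {x : G} (hx : x ∈ H) {n : ℤ}
    (hn : n ≠ 0) (hnx : n • x ∈ K) : x ∈ K := by
  by_contra hxK
  refine htf (⟨x, hx⟩ : H) (by rwa [Ne, QuotientAddGroup.eq_zero_iff, mem_addSubgroupOf])
    (isOfFinAddOrder_iff_zsmul_eq_zero.mpr ⟨n, hn, ?_⟩)
  rw [← QuotientAddGroup.mk_zsmul, QuotientAddGroup.eq_zero_iff, mem_addSubgroupOf]
  exact hnx

theorem mem_of_zsmul_mem_of_forall_isTorsionFree {H : ℕ → AddSubgroup G} (hdesc : ∀ i, H (i + 1) ≤ H i)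
    (htf : ∀ i, AddMonoid.IsTorsionFree (H i ⧸ (H (i + 1)).addSubgroupOf (H i)))
    {x : G} (hx : x ∈ H 0) {n : ℤ} (hn : n ≠ 0) : ∀ i, n • x ∈ H i → x ∈ H i
  | 0, _ => hx
  | i + 1, hnx => mem_of_zsmul_mem_of_isTorsionFree (htf i)
      (mem_of_zsmul_mem_of_forall_isTorsionFree hdesc htf hx hn i (hdesc i hnx)) hn hnx

theorem discreteTopology_of_addSubgroupOf_eq_bot [TopologicalSpace G] [IsTopologicalAddGroup G]
    {B U : AddSubgroup G} (hU : IsOpen (U : Set G)) (hBU : U.addSubgroupOf B = ⊥) :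
    DiscreteTopology B := by
  rw [discreteTopology_iff_isOpen_singleton_zero]
  convert hU.preimage continuous_subtype_val
  ext x
  simp [← mem_addSubgroupOf, hBU]

end AddSubgroup

theorem eq_of_forall_mem_of_forall_nhds {X : Type*} [TopologicalSpace X] [T1Space X] {x₀ x : X}
    {s : ℕ → Set X} (hbasis : ∀ U ∈ nhds x₀, ∃ i, s i ⊆ U) (hx : ∀ i, x ∈ s i) : x = x₀ := by
  by_contra hne
  obtain ⟨i, hi⟩ := hbasis _ (isOpen_compl_singleton.mem_nhds (Ne.symm hne))
  exact hi (hx i) rfl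

/-- Let `G` be a Hausdorff topological abelian group and let
`H 0 ⊇ H 1 ⊇ H 2 ⊇ ⋯` be a descending sequence of open subgroups of `G` forming a
neighbourhood basis of the identity, such that each quotient `H i / H (i+1)` is
torsion-free.  Then every finitely generated subgroup `B` of `G` with `B ⊆ H 0` is
discrete in `G`. -/
theorem stmt_4 {G : Type*} [AddCommGroup G] [TopologicalSpace G] [IsTopologicalAddGroup G]
    [T2Space G] (H : ℕ → AddSubgroup G)
    (hopen : ∀ i, IsOpen (H i : Set G))
    (hdesc : ∀ i, H (i + 1) ≤ H i)
    (hbasis : ∀ U ∈ nhds (0 : G), ∃ i, (H i : Set G) ⊆ U)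
    (htf : ∀ i, AddMonoid.IsTorsionFree ((H i) ⧸ (H (i + 1)).addSubgroupOf (H i)))
    (B : AddSubgroup G) (hBfg : B.FG) (hB : B ≤ H 0) :
    DiscreteTopology B := by
  let K : ℕ → Submodule ℤ B := fun i => ((H i).addSubgroupOf B).toIntSubmodule
  have : Module.Finite ℤ B :=
    Module.Finite.iff_addGroup_fg.mpr ((AddGroup.fg_iff_addSubgroup_fg B).mpr hBfg)
  have hanti : Antitone K := fun _ _ hij _ hx => antitone_nat_of_succ_le hdesc hij hx
  have hsat : ∀ i (n : ℤ) (x : B), n ≠ 0 → n • x ∈ K i → x ∈ K i := fun i n x hn hnx =>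
    AddSubgroup.mem_of_zsmul_mem_of_forall_isTorsionFree hdesc htf (hB x.2) hn i hnx
  obtain ⟨N, hN⟩ := Submodule.exists_eq_iInf_of_antitone_of_smul_mem hanti hsat
  refine AddSubgroup.discreteTopology_of_addSubgroupOf_eq_bot (hopen N) ?_
  refine eq_bot_iff.mpr fun x hx => ?_
  have hxK : x ∈ ⨅ i, K i := hN ▸ hx
  exact Subtype.ext (eq_of_forall_mem_of_forall_nhds hbasis (Submodule.mem_iInf K |>.mp hxK))
end

section
/- Let G be a complete, metrizable topological abelian group, and let n be a positive integer. Let G[n] = {t ∈ G : n·t = 0} denote the n-torsion subgroup. Suppose that for every neighbourhood U of 0 there exists a neighbourhood V of 0 such that every g ∈ G with n·g ∈ V satisfies g ∈ G[n] + U. Then the subgroup nG = {n·g : g ∈ G} is closed in G; equivalently, the quotient group G/nG is Hausdorff. -/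
open Filter Topology
open scoped Pointwise

/-! The hypothesis says that multiplication by `n`, viewed as a map `G ⧸ G[n] → G`, is open onto
its image, hence a uniform embedding of topological groups. Since `G` is complete and first
countable, so is its quotient `G ⧸ G[n]`, and the complete image `nG` is closed. -/

namespace AddMonoidHom

theorem isInducing_kerLift_of_preimage_subset_ker_add {G H : Type*} [AddCommGroup G]
    [TopologicalSpace G] [IsTopologicalAddGroup G] [AddGroup H] [TopologicalSpace H]
    [IsTopologicalAddGroup H] {f : G →+ H} (hf : Continuous f)
    (h : ∀ U ∈ 𝓝 (0 : G), ∃ V ∈ 𝓝 (0 : H), f ⁻¹' V ⊆ (f.ker : Set G) + U) :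
    IsInducing (QuotientAddGroup.kerLift f) := by
  rw [IsTopologicalAddGroup.isInducing_iff_nhds_zero]
  refine le_antisymm ?_ fun W hW => ?_
  · have hcont : Continuous (QuotientAddGroup.kerLift f) :=
      QuotientAddGroup.isQuotientMap_mk _ |>.continuous_iff.2 hf
    simpa [tendsto_iff_comap] using hcont.tendsto 0
  · rw [← QuotientAddGroup.mk_zero, QuotientAddGroup.nhds_eq, mem_map] at hW
    obtain ⟨V, hV, hVU⟩ := h _ hW
    refine ⟨V, hV, fun q hq => ?_⟩
    induction q using QuotientAddGroup.induction_on with | H g => ?_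
    obtain ⟨k, hk, u, hu, rfl⟩ := hVU hq
    show ((k + u : G) : G ⧸ f.ker) ∈ W
    rwa [QuotientAddGroup.mk_add, (QuotientAddGroup.eq_zero_iff k).2 hk, zero_add]

theorem isClosed_range_of_preimage_subset_ker_add {G H : Type*} [AddCommGroup G] [UniformSpace G]
    [IsUniformAddGroup G] [FirstCountableTopology G] [CompleteSpace G] [AddGroup H]
    [UniformSpace H] [IsUniformAddGroup H] [T0Space H] {f : G →+ H} (hf : Continuous f)
    (h : ∀ U ∈ 𝓝 (0 : G), ∃ V ∈ 𝓝 (0 : H), f ⁻¹' V ⊆ (f.ker : Set G) + U) :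
    IsClosed (Set.range f) := by
  let _ : UniformSpace (G ⧸ f.ker) := IsTopologicalAddGroup.rightUniformSpace _
  have _ : IsUniformAddGroup (G ⧸ f.ker) := isUniformAddGroup_of_addCommGroup
  have hinducing : IsInducing (QuotientAddGroup.kerLift f) :=
    isInducing_kerLift_of_preimage_subset_ker_add hf h
  have hrange : Set.range (QuotientAddGroup.kerLift f) = Set.range f :=
    (QuotientAddGroup.mk_surjective.range_comp _).symm
  rw [← hrange]
  exact (isUniformInducing_of_isInducing hinducing).isComplete_range.isClosed

end AddMonoidHom

theorem stmt_6_general {G : Type*} [AddCommGroup G] [UniformSpace G] [IsUniformAddGroup G]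
    [CompleteSpace G] [TopologicalSpace.MetrizableSpace G]
    (n : ℕ)
    (happrox : ∀ U ∈ nhds (0 : G), ∃ V ∈ nhds (0 : G),
      ∀ g : G, n • g ∈ V → ∃ t u : G, n • t = 0 ∧ u ∈ U ∧ g = t + u) :
    IsClosed {x : G | ∃ g : G, x = n • g} := by
  have hrange : {x : G | ∃ g : G, x = n • g} = Set.range (nsmulAddMonoidHom (α := G) n) := by
    ext x
    exact exists_congr fun g => eq_comm
  rw [hrange]
  refine AddMonoidHom.isClosed_range_of_preimage_subset_ker_add (continuous_nsmul n) fun U hU => ?_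
  obtain ⟨V, hV, hVU⟩ := happrox U hU
  refine ⟨V, hV, fun g hg => ?_⟩
  obtain ⟨t, u, ht, hu, rfl⟩ := hVU g hg
  exact ⟨t, ht, u, hu, rfl⟩

/-- Let `G` be a complete, metrizable topological abelian group (with its
natural uniform structure), and let `n` be a positive integer.  Let
`G[n] = {t : G | n • t = 0}` be the `n`-torsion subgroup.  Suppose that for every
neighbourhood `U` of `0` there exists a neighbourhood `V` of `0` such that every `g ∈ G`
with `n • g ∈ V` satisfies `g ∈ G[n] + U`.  Then the subgroup `nG = {n • g : g ∈ G}` is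
closed in `G`. -/
theorem stmt_6 {G : Type*} [AddCommGroup G] [UniformSpace G] [IsUniformAddGroup G]
    [CompleteSpace G] [TopologicalSpace.MetrizableSpace G]
    (n : ℕ) (hn : 0 < n)
    (happrox : ∀ U ∈ nhds (0 : G), ∃ V ∈ nhds (0 : G),
      ∀ g : G, n • g ∈ V → ∃ t u : G, n • t = 0 ∧ u ∈ U ∧ g = t + u) :
    IsClosed {x : G | ∃ g : G, x = n • g} :=
  stmt_6_general n happrox
end
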